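/- arXiv:1910.01776 — 2 statements merged into one kernel-verified Lean document; each statement's English description precedes it below -/
import Mathlib

section
/- Let P₁, …, Pₙ : M → Mₙ(ℂ) be smooth families of orthogonal projections with mutually orthogonal one-dimensional images satisfying ∑ᵢ Pᵢ = 1 and Pᵢ Pⱼ = 0 for i ≠ j. Then for pairwise distinct indices i, j, k one has tr(Pᵢ dPⱼ dP_k) = 0 (as a 2-form on M). -/
attribute [local instance] Matrix.normedAddCommGroup Matrix.normedSpace

/-- Partial derivative in the `a`-th coordinate direction of a matrix-valued map. -/
noncomputable def pdM {m n : ℕ} (a : Fin m)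
    (f : (Fin m → ℝ) → Matrix (Fin n) (Fin n) ℂ) (x : Fin m → ℝ) :
    Matrix (Fin n) (Fin n) ℂ :=
  fderiv ℝ f x (Pi.single a 1)

section aux

variable {m n : ℕ}

/-- Matrix multiplication as a continuous bilinear map. -/
abbrev NCLM (E F : Type*) [NormedAddCommGroup E] [NormedSpace ℝ E] [NormedAddCommGroup F]
    [NormedSpace ℝ F] := E →L[ℝ] F

noncomputable def mulCLM (n : ℕ) :
    NCLM (Matrix (Fin n) (Fin n) ℂ) (NCLM (Matrix (Fin n) (Fin n) ℂ) (Matrix (Fin n) (Fin n) ℂ)) :=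
  LinearMap.toContinuousLinearMap
    ((LinearMap.toContinuousLinearMap :
        (Matrix (Fin n) (Fin n) ℂ →ₗ[ℝ] Matrix (Fin n) (Fin n) ℂ) ≃ₗ[ℝ]
          (Matrix (Fin n) (Fin n) ℂ →L[ℝ] Matrix (Fin n) (Fin n) ℂ)).toLinearMap ∘ₗ
      LinearMap.mul ℝ (Matrix (Fin n) (Fin n) ℂ))

@[simp] lemma mulCLM_apply (A B : Matrix (Fin n) (Fin n) ℂ) : mulCLM n A B = A * B := rfl

lemma hasFDerivAt_mul (f g : (Fin m → ℝ) → Matrix (Fin n) (Fin n) ℂ)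
    (hf : ContDiff ℝ (⊤ : ℕ∞) f) (hg : ContDiff ℝ (⊤ : ℕ∞) g) (x : Fin m → ℝ) :
    HasFDerivAt (fun y => f y * g y)
      (((mulCLM n (f x)).comp (fderiv ℝ g x) : (Fin m → ℝ) →L[ℝ] Matrix (Fin n) (Fin n) ℂ) +
        (((mulCLM n).comp (fderiv ℝ f x)).flip (g x))) x := by
  have hf' : HasFDerivAt f (fderiv ℝ f x) x :=
    (hf.differentiable (by simp) x).hasFDerivAt
  have hg' : HasFDerivAt g (fderiv ℝ g x) x :=
    (hg.differentiable (by simp) x).hasFDerivAt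
  have hc : HasFDerivAt (fun y => mulCLM n (f y)) ((mulCLM n).comp (fderiv ℝ f x)) x :=
    (mulCLM n).hasFDerivAt.comp x hf'
  exact hc.clm_apply hg'

lemma pdM_mul (f g : (Fin m → ℝ) → Matrix (Fin n) (Fin n) ℂ)
    (hf : ContDiff ℝ (⊤ : ℕ∞) f) (hg : ContDiff ℝ (⊤ : ℕ∞) g) (a : Fin m) (x : Fin m → ℝ) :
    pdM a (fun y => f y * g y) x = pdM a f x * g x + f x * pdM a g x := by
  have h := (hasFDerivAt_mul f g hf hg x).fderiv
  unfold pdM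
  erw [h]
  simp [add_comm]
  rfl

/-- Product rule for a product that is identically zero. -/
lemma pdM_mul_zero (f g : (Fin m → ℝ) → Matrix (Fin n) (Fin n) ℂ)
    (hf : ContDiff ℝ (⊤ : ℕ∞) f) (hg : ContDiff ℝ (⊤ : ℕ∞) g)
    (h0 : ∀ y, f y * g y = 0) (a : Fin m) (x : Fin m → ℝ) :
    pdM a f x * g x + f x * pdM a g x = 0 := by
  rw [← pdM_mul f g hf hg a x]
  have : (fun y => f y * g y) = fun _ => (0 : Matrix (Fin n) (Fin n) ℂ) := funext h0
  rw [this]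
  unfold pdM
  simp

lemma swap_right (f g : (Fin m → ℝ) → Matrix (Fin n) (Fin n) ℂ)
    (hf : ContDiff ℝ (⊤ : ℕ∞) f) (hg : ContDiff ℝ (⊤ : ℕ∞) g)
    (h0 : ∀ y, f y * g y = 0) (a : Fin m) (x : Fin m → ℝ) :
    f x * pdM a g x = -(pdM a f x * g x) :=
  eq_neg_of_add_eq_zero_right (pdM_mul_zero f g hf hg h0 a x)

lemma swap_left (f g : (Fin m → ℝ) → Matrix (Fin n) (Fin n) ℂ)
    (hf : ContDiff ℝ (⊤ : ℕ∞) f) (hg : ContDiff ℝ (⊤ : ℕ∞) g)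
    (h0 : ∀ y, f y * g y = 0) (a : Fin m) (x : Fin m → ℝ) :
    pdM a f x * g x = -(f x * pdM a g x) :=
  eq_neg_of_add_eq_zero_left (pdM_mul_zero f g hf hg h0 a x)

lemma key_zero (P : Fin n → (Fin m → ℝ) → Matrix (Fin n) (Fin n) ℂ)
    (hsm : ∀ i, ContDiff ℝ (⊤ : ℕ∞) (P i))
    (hidem : ∀ i x, P i x * P i x = P i x)
    (horth : ∀ i j, i ≠ j → ∀ x, P i x * P j x = 0)
    (i j k : Fin n) (hij : i ≠ j) (hjk : j ≠ k) (hik : i ≠ k)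
    (a b : Fin m) (x : Fin m → ℝ) :
    (P i x * pdM a (P j) x * pdM b (P k) x).trace = 0 := by
  have h1 : P i x * pdM a (P j) x = -(pdM a (P i) x * P j x) :=
    swap_right (P i) (P j) (hsm i) (hsm j) (horth i j hij) a x
  have h2 : pdM b (P k) x * P i x = -(P k x * pdM b (P i) x) :=
    swap_left (P k) (P i) (hsm k) (hsm i) (horth k i (Ne.symm hik)) b x
  calc (P i x * pdM a (P j) x * pdM b (P k) x).trace
      = ((P i x * P i x) * pdM a (P j) x * pdM b (P k) x).trace := by rw [hidem i x]
    _ = (P i x * ((P i x * pdM a (P j) x) * pdM b (P k) x)).trace := by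
        rw [mul_assoc, mul_assoc, mul_assoc]
    _ = (((P i x * pdM a (P j) x) * pdM b (P k) x) * P i x).trace := by
        rw [Matrix.trace_mul_comm]
    _ = ((P i x * pdM a (P j) x) * (pdM b (P k) x * P i x)).trace := by rw [mul_assoc]
    _ = ((pdM a (P i) x * P j x) * (P k x * pdM b (P i) x)).trace := by
        rw [h1, h2, neg_mul_neg]
    _ = 0 := by
        rw [mul_assoc, ← mul_assoc (P j x), horth j k hjk x]
        simp

end aux

/-- for smooth families `P₁, …, Pₙ` of orthogonal projections with mutually
orthogonal one-dimensional images, `∑ Pᵢ = 1` and `Pᵢ Pⱼ = 0` for `i ≠ j`, the 2-form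
`tr(Pᵢ dPⱼ dP_k)` vanishes for pairwise distinct `i, j, k`; evaluated on commuting partial
derivatives this reads `tr(Pᵢ (∂ₐPⱼ)(∂_bP_k)) − tr(Pᵢ (∂_bPⱼ)(∂ₐP_k)) = 0`. -/
theorem stmt3 {m n : ℕ}
    (P : Fin n → (Fin m → ℝ) → Matrix (Fin n) (Fin n) ℂ)
    (hsm : ∀ i, ContDiff ℝ (⊤ : ℕ∞) (P i))
    (hherm : ∀ i x, (P i x).IsHermitian)
    (hidem : ∀ i x, P i x * P i x = P i x)
    (hrank : ∀ i x, (P i x).rank = 1)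
    (hsum : ∀ x, ∑ i, P i x = 1)
    (horth : ∀ i j, i ≠ j → ∀ x, P i x * P j x = 0)
    (i j k : Fin n) (hij : i ≠ j) (hjk : j ≠ k) (hik : i ≠ k)
    (a b : Fin m) (x : Fin m → ℝ) :
    (P i x * pdM a (P j) x * pdM b (P k) x).trace
      - (P i x * pdM b (P j) x * pdM a (P k) x).trace = 0 := by
  rw [key_zero P hsm hidem horth i j k hij hjk hik a b x,
      key_zero P hsm hidem horth i j k hij hjk hik b a x, sub_zero]
end

section
/- Let P₁, …, Pₙ : M → Mₙ(ℂ) be smooth families of orthogonal projections with ∑ᵢ Pᵢ = 1 and Pᵢ Pⱼ = 0 for i ≠ j. Then for i ≠ j, tr(Pᵢ dPⱼ dPⱼ) = − tr(Pⱼ dPᵢ dPᵢ) as 2-forms on M. -/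
attribute [local instance] Matrix.normedAddCommGroup Matrix.normedSpace

/-- Multiplication of matrices as a continuous bilinear map. -/
noncomputable def mulLaux (n : ℕ) :
    Matrix (Fin n) (Fin n) ℂ →L[ℝ] Matrix (Fin n) (Fin n) ℂ →L[ℝ] Matrix (Fin n) (Fin n) ℂ :=
  LinearMap.toContinuousLinearMap
    { toFun := fun A =>
        LinearMap.toContinuousLinearMap (LinearMap.mul ℝ (Matrix (Fin n) (Fin n) ℂ) A)
      map_add' := by intro A B; ext C; simp [add_mul]
      map_smul' := by intro c A; ext C; simp [smul_mul_assoc] }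

/-- Product rule for `pdM`. -/
theorem pdM_mul_aux {m n : ℕ} (a : Fin m) (f g : (Fin m → ℝ) → Matrix (Fin n) (Fin n) ℂ)
    (hf : ContDiff ℝ (⊤ : ℕ∞) f) (hg : ContDiff ℝ (⊤ : ℕ∞) g) (x : Fin m → ℝ) :
    pdM a (fun y => f y * g y) x = pdM a f x * g x + f x * pdM a g x := by
  have hfd : HasFDerivAt f (fderiv ℝ f x) x := (hf.differentiable (by simp) x).hasFDerivAt
  have hgd : HasFDerivAt g (fderiv ℝ g x) x := (hg.differentiable (by simp) x).hasFDerivAt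
  have h := ((mulLaux n).hasFDerivAt_of_bilinear hfd hgd).fderiv
  unfold pdM
  erw [show (fun y => f y * g y) = (fun y => mulLaux n (f y) (g y)) from rfl, h]
  simp only [ContinuousLinearMap.add_apply, ContinuousLinearMap.precompR,
    ContinuousLinearMap.precompL, ContinuousLinearMap.comp_apply]
  exact add_comm _ _

/-- Key trace identity. -/
theorem key_trace_aux {n : ℕ} (Qi Qj Ai Aj Bi Bj : Matrix (Fin n) (Fin n) ℂ)
    (hQi : Qi * Qi = Qi) (hji : Qj * Qi = 0)
    (hA : Ai * Qj + Qi * Aj = 0)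
    (hBj : Bj * Qj + Qj * Bj = Bj)
    (hB : Bj * Qi + Qj * Bi = 0) :
    (Qi * Aj * Bj).trace = (Qj * Bi * Ai).trace := by
  have hA' : Qi * Aj = -(Ai * Qj) := eq_neg_of_add_eq_zero_right hA
  have hB' : Bj * Qi = -(Qj * Bi) := eq_neg_of_add_eq_zero_left hB
  have e1 : Qi * Aj = -(Qi * Ai * Qj) := by
    calc Qi * Aj = Qi * (Qi * Aj) := by rw [← mul_assoc, hQi]
    _ = Qi * (-(Ai * Qj)) := by rw [hA']
    _ = -(Qi * Ai * Qj) := by rw [mul_neg, mul_assoc]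
  have e2 : Qj * Bj = Bj - Bj * Qj := eq_sub_of_add_eq' hBj
  have e3 : (Qi * Ai * (Bj * Qj)).trace = 0 := by
    rw [← mul_assoc, Matrix.trace_mul_comm, ← mul_assoc, ← mul_assoc, hji, Matrix.zero_mul,
      Matrix.zero_mul, Matrix.trace_zero]
  have e4 : (Qi * Ai * Bj).trace = -(Qj * Bi * Ai).trace := by
    rw [Matrix.trace_mul_comm, ← mul_assoc, hB', neg_mul, Matrix.trace_neg]
  calc (Qi * Aj * Bj).trace = (-(Qi * Ai * Qj) * Bj).trace := by rw [e1]
    _ = -((Qi * Ai * (Qj * Bj)).trace) := by rw [neg_mul, Matrix.trace_neg, mul_assoc]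
    _ = -((Qi * Ai * (Bj - Bj * Qj)).trace) := by rw [e2]
    _ = -((Qi * Ai * Bj).trace - (Qi * Ai * (Bj * Qj)).trace) := by
        rw [mul_sub, Matrix.trace_sub]
    _ = (Qj * Bi * Ai).trace := by rw [e3, e4]; ring

/-- for smooth families `P₁, …, Pₙ` of orthogonal projections with `∑ Pᵢ = 1` and
`Pᵢ Pⱼ = 0` for `i ≠ j`, one has `tr(Pᵢ dPⱼ dPⱼ) = − tr(Pⱼ dPᵢ dPᵢ)` as 2-forms;
evaluated on commuting partial derivatives `∂ₐ, ∂_b`. -/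
theorem stmt4 {m n : ℕ}
    (P : Fin n → (Fin m → ℝ) → Matrix (Fin n) (Fin n) ℂ)
    (hsm : ∀ i, ContDiff ℝ (⊤ : ℕ∞) (P i))
    (hherm : ∀ i x, (P i x).IsHermitian)
    (hidem : ∀ i x, P i x * P i x = P i x)
    (hsum : ∀ x, ∑ i, P i x = 1)
    (horth : ∀ i j, i ≠ j → ∀ x, P i x * P j x = 0)
    (i j : Fin n) (hij : i ≠ j)
    (a b : Fin m) (x : Fin m → ℝ) :
    (P i x * pdM a (P j) x * pdM b (P j) x).trace
      - (P i x * pdM b (P j) x * pdM a (P j) x).trace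
      = -((P j x * pdM a (P i) x * pdM b (P i) x).trace
          - (P j x * pdM b (P i) x * pdM a (P i) x).trace) := by
  have hpd0 : ∀ (c : Fin m) (k l : Fin n), k ≠ l →
      pdM c (P k) x * P l x + P k x * pdM c (P l) x = 0 := by
    intro c k l hkl
    have h0 : (fun y => P k y * P l y) = (fun _ => (0 : Matrix (Fin n) (Fin n) ℂ)) :=
      funext (horth k l hkl)
    have := pdM_mul_aux c (P k) (P l) (hsm k) (hsm l) x
    rw [h0] at this
    rw [← this]
    simp [pdM]
  have hpdI : ∀ (c : Fin m) (k : Fin n),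
      pdM c (P k) x * P k x + P k x * pdM c (P k) x = pdM c (P k) x := by
    intro c k
    have h0 : (fun y => P k y * P k y) = P k := funext (hidem k)
    have := pdM_mul_aux c (P k) (P k) (hsm k) (hsm k) x
    rw [h0] at this
    exact this.symm
  have hji : P j x * P i x = 0 := horth j i hij.symm x
  have hijx : P i x * P j x = 0 := horth i j hij x
  have key1 : (P i x * pdM a (P j) x * pdM b (P j) x).trace
      = (P j x * pdM b (P i) x * pdM a (P i) x).trace :=
    key_trace_aux (P i x) (P j x) (pdM a (P i) x) (pdM a (P j) x) (pdM b (P i) x)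
      (pdM b (P j) x) (hidem i x) hji (hpd0 a i j hij) (hpdI b j) (hpd0 b j i hij.symm)
  have key2 : (P i x * pdM b (P j) x * pdM a (P j) x).trace
      = (P j x * pdM a (P i) x * pdM b (P i) x).trace :=
    key_trace_aux (P i x) (P j x) (pdM b (P i) x) (pdM b (P j) x) (pdM a (P i) x)
      (pdM a (P j) x) (hidem i x) hji (hpd0 b i j hij) (hpdI a j) (hpd0 a j i hij.symm)
  rw [key1, key2]; ring
end
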